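/- arXiv:2404.12070 — 7 statements merged into one kernel-verified Lean document; each statement's English description precedes it below -/
import Mathlib

section
/- Partition refinement lemma: let S be a set and let {A_i}_{i∈I} and {B_j}_{j∈J} be two partitions of S into nonempty sets such that for each i ∈ I and j ∈ J, the sets A_i and B_j are either disjoint or one is a subset of the other. Then there exist a subset I₀ ⊆ I, a subset J₀ ⊆ J, families {J_i}_{i∈I₀} partitioning J \ J₀ and {I_j}_{j∈J₀} partitioning I \ I₀, such that for each i ∈ I₀, A_i = ⋃_{j∈J_i} B_j, and for each j ∈ J₀, B_j = ⋃_{i∈I_j} A_i. -/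
/-!
Take `I₀` to be the blocks `A i` not strictly contained in any `B j`, and `J₀` the blocks `B j`
not contained in any `A i`. By the nesting hypothesis each block of either kind is the union of the
blocks of the other partition it contains. A block `B j` inside some `A i` lies inside a block of
`I₀`: otherwise `B j ⊆ A i ⊂ B j'` forces `j = j'`. Everything else follows from the fact that two
distinct blocks of one partition cannot both contain the same nonempty set.
-/

open Function Set

section

variable {α ι κ : Type*} {A : ι → Set α} {B : κ → Set α} {i : ι} {j : κ}

theorem Pairwise.eq_of_nonempty_subset (hA : Pairwise (Disjoint on A)) {s : Set α}
    (hs : s.Nonempty) {i i' : ι} (hi : s ⊆ A i) (hi' : s ⊆ A i') : i = i' :=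
  hA.eq fun h => hs.ne_empty (disjoint_self.mp (h.mono hi hi'))

theorem Pairwise.disjoint_setOf_subset (hA : Pairwise (Disjoint on A))
    (hB : ∀ j, (B j).Nonempty) {i i' : ι} (h : i ≠ i') :
    Disjoint {j | B j ⊆ A i} {j | B j ⊆ A i'} :=
  disjoint_left.mpr fun j hj hj' => h (hA.eq_of_nonempty_subset (hB j) hj hj')

theorem eq_biUnion_setOf_subset {s : Set α} (hcov : s ⊆ ⋃ j, B j)
    (h : ∀ j, Disjoint s (B j) ∨ B j ⊆ s) : s = ⋃ j ∈ {j | B j ⊆ s}, B j := by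
  refine Subset.antisymm (fun x hx => ?_) (iUnion₂_subset fun j hj => hj)
  obtain ⟨j, hj⟩ := mem_iUnion.mp (hcov hx)
  rcases h j with hdisj | hsub
  · exact absurd hj (disjoint_left.mp hdisj hx)
  · exact mem_biUnion hsub hj

def maximalBlocks (A : ι → Set α) (B : κ → Set α) : Set ι := {i | ∀ j, ¬ A i ⊂ B j}

theorem subset_of_mem_maximalBlocks (hi : i ∈ maximalBlocks A B) (hij : A i ⊆ B j) :
    B j ⊆ A i :=
  not_not.mp fun hji => hi j (ssubset_of_subset_not_subset hij hji)

theorem exists_ssubset_of_notMem_maximalBlocks (hi : i ∉ maximalBlocks A B) :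
    ∃ j, A i ⊂ B j := by
  simpa [maximalBlocks] using hi

theorem not_subset_of_notMem_maximalBlocks (hBdisj : Pairwise (Disjoint on B))
    (hBne : (B j).Nonempty) (hi : i ∉ maximalBlocks A B) : ¬ B j ⊆ A i := by
  intro hji
  obtain ⟨j', hij'⟩ := exists_ssubset_of_notMem_maximalBlocks hi
  obtain rfl := hBdisj.eq_of_nonempty_subset hBne subset_rfl (hji.trans hij'.subset)
  exact hij'.not_subset hji

theorem biUnion_maximalBlocks_setOf_subset_eq_compl (hBdisj : Pairwise (Disjoint on B))
    (hBne : ∀ j, (B j).Nonempty) :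
    ⋃ i ∈ maximalBlocks A B, {j | B j ⊆ A i} = {j | ∀ i, ¬ B j ⊆ A i}ᶜ := by
  ext j
  simp only [mem_iUnion, mem_ofPred, mem_compl_iff, exists_prop, not_forall, not_not]
  refine ⟨fun ⟨i, _, hji⟩ => ⟨i, hji⟩, fun ⟨i, hji⟩ => ⟨i, ?_, hji⟩⟩
  exact not_not.mp fun hi => not_subset_of_notMem_maximalBlocks hBdisj (hBne j) hi hji

theorem biUnion_setOf_subset_eq_compl_maximalBlocks (hAdisj : Pairwise (Disjoint on A))
    (hAne : ∀ i, (A i).Nonempty) :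
    ⋃ j ∈ {j | ∀ i, ¬ B j ⊆ A i}, {i | A i ⊆ B j} = (maximalBlocks A B)ᶜ := by
  ext i
  simp only [mem_iUnion, mem_ofPred, mem_compl_iff, exists_prop]
  refine ⟨fun ⟨j, hj, hij⟩ hi => hj i (subset_of_mem_maximalBlocks hi hij), fun hi => ?_⟩
  obtain ⟨j, hij⟩ := exists_ssubset_of_notMem_maximalBlocks hi
  refine ⟨j, fun i' hji' => hij.not_subset ?_, hij.subset⟩
  rwa [hAdisj.eq_of_nonempty_subset (hAne i) subset_rfl (hij.subset.trans hji')]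

end

theorem stmt2 {α ι κ : Type*} (S : Set α) (A : ι → Set α) (B : κ → Set α)
    (hAne : ∀ i, (A i).Nonempty) (hBne : ∀ j, (B j).Nonempty)
    (hAdisj : Pairwise (Function.onFun Disjoint A))
    (hBdisj : Pairwise (Function.onFun Disjoint B))
    (hAcov : ⋃ i, A i = S) (hBcov : ⋃ j, B j = S)
    (hnest : ∀ i j, Disjoint (A i) (B j) ∨ A i ⊆ B j ∨ B j ⊆ A i) :
    ∃ (I₀ : Set ι) (J₀ : Set κ) (JI : ι → Set κ) (IJ : κ → Set ι),
      (∀ i ∈ I₀, ∀ i' ∈ I₀, i ≠ i' → Disjoint (JI i) (JI i')) ∧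
      (⋃ i ∈ I₀, JI i) = J₀ᶜ ∧
      (∀ j ∈ J₀, ∀ j' ∈ J₀, j ≠ j' → Disjoint (IJ j) (IJ j')) ∧
      (⋃ j ∈ J₀, IJ j) = I₀ᶜ ∧
      (∀ i ∈ I₀, A i = ⋃ j ∈ JI i, B j) ∧
      (∀ j ∈ J₀, B j = ⋃ i ∈ IJ j, A i) := by
  have hA_sub_B (i : ι) : A i ⊆ ⋃ j, B j := hBcov ▸ hAcov ▸ subset_iUnion A i
  have hB_sub_A (j : κ) : B j ⊆ ⋃ i, A i := hAcov ▸ hBcov ▸ subset_iUnion B j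
  refine ⟨maximalBlocks A B, {j | ∀ i, ¬ B j ⊆ A i}, fun i => {j | B j ⊆ A i},
    fun j => {i | A i ⊆ B j},
    fun i _ i' _ => hAdisj.disjoint_setOf_subset hBne,
    biUnion_maximalBlocks_setOf_subset_eq_compl hBdisj hBne,
    fun j _ j' _ => hBdisj.disjoint_setOf_subset hAne,
    biUnion_setOf_subset_eq_compl_maximalBlocks hAdisj hAne,
    fun i hi => eq_biUnion_setOf_subset (hA_sub_B i) fun j => ?_,
    fun j hj => eq_biUnion_setOf_subset (hB_sub_A j) fun i => ?_⟩
  · rcases hnest i j with hdisj | hij | hji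
    exacts [.inl hdisj, .inr (subset_of_mem_maximalBlocks hi hij), .inr hji]
  · rcases hnest i j with hdisj | hij | hji
    exacts [.inl hdisj.symm, .inr hij, absurd hji (hj i)]
end

section
/- The set function μ̄_ā defined on homogeneous unions of cylinder sets by μ̄_ā(⋃_{b∈K} E(b)) = Σ_{b∈K} g_ā(b) is well-defined and countably additive on the Boolean algebra ℰ: if (A_n)_{n∈ℕ} is a family of pairwise disjoint elements of ℰ whose union lies in ℰ, then μ̄_ā(⋃_n A_n) = Σ_n μ̄_ā(A_n). Moreover μ̄_ā(F) ≤ 1, so μ̄_ā is a finite pre-measure. -/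
/-- The cylinder set of infinite sequences beginning with the finite word `b`. -/
def cylinder {O : Type*} (b : List O) : Set (ℕ → O) :=
  {x | ∀ (i : ℕ) (h : i < b.length), x i = b.get ⟨i, h⟩}

/-- The Boolean algebra of homogeneous unions of cylinder sets. -/
def cylAlg (O : Type*) : Set (Set (ℕ → O)) :=
  {S | ∃ (k : ℕ) (K : Set (List O)), (∀ b ∈ K, b.length = k) ∧ S = ⋃ b ∈ K, cylinder b}

/-!
The content of a set `S` depending only on the first `k` coordinates is the total weight of the
words of length `k` whose cylinders lie in `S`; since the weight of a word is the sum of the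
weights of its one-letter extensions, this does not depend on `k`, and the content is finitely
additive. Countable additivity reduces to σ-subadditivity, which is a compactness argument:
as `O` is countable, for each coordinate `i` a finite set `F i` of letters misses at most `δ i` of
the mass, the product of the `F i` is compact for the discrete topology on `O`, and all sets
involved are clopen, so finitely many `A n` cover `S` up to a set of content at most `∑ δ i`.
-/

open Set Filter Topology
open MeasureTheory hiding cylinder

namespace CylinderContent

variable {O : Type*}

lemma mem_cylinder {b : List O} {x : ℕ → O} :
    x ∈ cylinder b ↔ ∀ (i : ℕ) (h : i < b.length), x i = b[i] := Iff.rfl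

lemma cylinder_nil : cylinder ([] : List O) = univ := by
  ext x; simp [mem_cylinder]

lemma cylinder_nonempty [Nonempty O] (b : List O) : (cylinder b).Nonempty :=
  ⟨fun i => if h : i < b.length then b[i] else Classical.arbitrary O, fun i h => by simp [h]⟩

lemma eq_of_mem_cylinder {b b' : List O} (hl : b.length = b'.length) {x : ℕ → O}
    (hx : x ∈ cylinder b) (hx' : x ∈ cylinder b') : b = b' :=
  List.ext_getElem hl fun i h h' => (hx i h).symm.trans (hx' i h')

lemma mem_cylinder_concat {b : List O} {c : O} {x : ℕ → O} :
    x ∈ cylinder (b ++ [c]) ↔ x ∈ cylinder b ∧ x b.length = c := by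
  simp only [mem_cylinder, List.length_append, List.length_singleton]
  constructor
  · intro h
    exact ⟨fun i hi => by simpa [List.getElem_append_left hi] using h i (by omega),
      by simpa using h b.length (by omega)⟩
  · rintro ⟨h, rfl⟩ i hi
    rcases Nat.lt_or_ge i b.length with hib | hib
    · simpa [List.getElem_append_left hib] using h i hib
    · obtain rfl : i = b.length := by omega
      simp

lemma dependsOn_mem_cylinder (b : List O) :
    DependsOn (· ∈ cylinder b) (Iio b.length) := fun x y hxy => by
  simp only [mem_cylinder, eq_iff_iff]
  exact forall₂_congr fun i hi => by rw [hxy i hi]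

lemma dependsOn_mem_biUnion {ι : Type*} {s : Set ι} {A : ι → Set (ℕ → O)} {k : ℕ}
    (hA : ∀ i ∈ s, DependsOn (· ∈ A i) (Iio k)) : DependsOn (· ∈ ⋃ i ∈ s, A i) (Iio k) :=
  fun x y hxy => by
    simp only [mem_iUnion, eq_iff_iff]
    exact exists_congr fun i => exists_congr fun hi => eq_iff_iff.mp (hA i hi hxy)

lemma dependsOn_mem_iInter {ι : Type*} {A : ι → Set (ℕ → O)} {k : ℕ}
    (hA : ∀ i, DependsOn (· ∈ A i) (Iio k)) : DependsOn (· ∈ ⋂ i, A i) (Iio k) :=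
  fun x y hxy => by
    simp only [mem_iInter, eq_iff_iff]
    exact forall_congr' fun i => eq_iff_iff.mp (hA i hxy)

lemma cylinder_subset_of_mem {A : Set (ℕ → O)} {b : List O}
    (hA : DependsOn (· ∈ A) (Iio b.length)) {x : ℕ → O} (hx : x ∈ cylinder b) (hxA : x ∈ A) :
    cylinder b ⊆ A :=
  fun _ hy => (hA fun i (hi : i < b.length) => (hx i hi).trans (hy i hi).symm).mp hxA

lemma dependsOn_mem_biUnion_cylinder {K : Set (List O)} {k : ℕ} (hK : ∀ b ∈ K, b.length = k) :
    DependsOn (· ∈ ⋃ b ∈ K, cylinder b) (Iio k) :=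
  dependsOn_mem_biUnion fun b hb => hK b hb ▸ dependsOn_mem_cylinder b

lemma dependsOn_of_mem_cylAlg {S : Set (ℕ → O)} (hS : S ∈ cylAlg O) :
    ∃ k, DependsOn (· ∈ S) (Iio k) := by
  obtain ⟨k, K, hK, rfl⟩ := hS
  exact ⟨k, dependsOn_mem_biUnion_cylinder hK⟩

lemma isClopen_of_dependsOn [TopologicalSpace O] [DiscreteTopology O] {S : Set (ℕ → O)}
    {k : ℕ} (hS : DependsOn (· ∈ S) (Iio k)) : IsClopen S := by
  obtain ⟨p, hp⟩ := dependsOn_iff_exists_comp.mp hS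
  have : S = (Iio k).domRestrict ⁻¹' {y | p y} := by ext x; exact Iff.of_eq (congrFun hp x)
  rw [this]
  exact (isClopen_discrete _).preimage (continuous_pi fun i => continuous_apply _)

lemma exists_finset_subset_biUnion_union {F : ℕ → Finset O} (hF : ∀ i, (F i).Nonempty)
    {S : Set (ℕ → O)} {k : ℕ} (hS : DependsOn (· ∈ S) (Iio k))
    {A : ℕ → Set (ℕ → O)} {kA : ℕ → ℕ} (hA : ∀ n, DependsOn (· ∈ A n) (Iio (kA n)))
    (hcover : S ⊆ ⋃ n, A n) :
    ∃ N : Finset ℕ, ∃ M, (∀ n ∈ N, kA n ≤ M) ∧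
      S ⊆ (⋃ n ∈ N, A n) ∪ ⋃ i ∈ Finset.range M, {x | x i ∉ F i} := by
  let : TopologicalSpace O := ⊥
  have : DiscreteTopology O := ⟨rfl⟩
  let P : Set (ℕ → O) := pi univ fun i => (F i : Set O)
  have hP : IsCompact P := isCompact_univ_pi fun i => (F i).finite_toSet.isCompact
  obtain ⟨N, hN⟩ := (hP.inter_left (isClopen_of_dependsOn hS).isClosed).elim_finite_subcover A
    (fun n => (isClopen_of_dependsOn (hA n)).isOpen) (inter_subset_left.trans hcover)
  set M := max k (N.sup kA)
  refine ⟨N, M, fun n hn => (Finset.le_sup hn).trans (le_max_right _ _), fun x hx => ?_⟩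
  by_cases hxF : ∀ i < M, x i ∈ F i
  · -- move `x` into `P` without changing its first `M` letters
    let x' : ℕ → O := fun i => if i < M then x i else (hF i).choose
    have hxx' : ∀ i < M, x i = x' i := fun i hi => (if_pos hi).symm
    have hx'P : x' ∈ P := fun i _ => by
      by_cases hi : i < M
      · simpa [x', hi] using hxF i hi
      · simpa [x', hi] using (hF i).choose_spec
    have hx'S : x' ∈ S := (hS fun i (hi : i < k) => hxx' i (hi.trans_le (le_max_left _ _))).mp hx
    obtain ⟨n, hn, hx'n⟩ := mem_iUnion₂.mp (hN ⟨hx'S, hx'P⟩)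
    have hnM : kA n ≤ M := (Finset.le_sup hn).trans (le_max_right _ _)
    exact .inl (mem_biUnion hn
      ((hA n fun i (hi : i < kA n) => (hxx' i (hi.trans_le hnM)).symm).mp hx'n))
  · push Not at hxF
    obtain ⟨i, hi, hxi⟩ := hxF
    exact .inr (mem_biUnion (Finset.mem_range.mpr hi) hxi)

local instance : MeasurableSpace (List O) := ⊤

local instance : DiscreteMeasurableSpace (List O) := ⟨fun _ => trivial⟩

noncomputable def wordWeight (g : List O → ℝ) : Measure (List O) :=
  Measure.sum fun b => ENNReal.ofReal (g b) • Measure.dirac b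

lemma wordWeight_apply (g : List O → ℝ) (K : Set (List O)) :
    wordWeight g K = ∑' b : K, ENNReal.ofReal (g b) := by
  rw [wordWeight, Measure.sum_apply _ (.of_discrete),
    tsum_subtype K fun b => ENNReal.ofReal (g b)]
  congr 1 with b
  by_cases hb : b ∈ K <;> simp [hb]

lemma wordWeight_biUnion_concat [Countable O] {g : List O → ℝ} (hg0 : ∀ b, 0 ≤ g b)
    (hg : ∀ b, HasSum (fun c : O => g (b ++ [c])) (g b)) (K : Set (List O)) :
    wordWeight g (⋃ b ∈ K, range fun c : O => b ++ [c]) = wordWeight g K := by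
  have hdisj : K.PairwiseDisjoint fun b => range fun c : O => b ++ [c] := by
    rintro b - b' - hne
    refine disjoint_left.mpr ?_
    rintro _ ⟨c, rfl⟩ ⟨c', hc⟩
    exact hne (List.append_inj' hc rfl).1.symm
  rw [measure_biUnion K.to_countable hdisj fun _ _ => .of_discrete, wordWeight_apply]
  refine tsum_congr fun b => ?_
  rw [wordWeight_apply,
    tsum_range (fun w => ENNReal.ofReal (g w)) fun c c' h => by simpa using h,
    ← ENNReal.ofReal_tsum_of_nonneg (fun c => hg0 _) (hg b).summable, (hg b).tsum_eq]

def cylWords (S : Set (ℕ → O)) (k : ℕ) : Set (List O) :=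
  {b | b.length = k ∧ cylinder b ⊆ S}

noncomputable def cylContent (g : List O → ℝ) (S : Set (ℕ → O)) : ENNReal :=
  ⨆ k, wordWeight g (cylWords S k)

lemma cylWords_mono {S T : Set (ℕ → O)} (h : S ⊆ T) (k : ℕ) : cylWords S k ⊆ cylWords T k :=
  fun _ hb => ⟨hb.1, hb.2.trans h⟩

lemma cylContent_mono (g : List O → ℝ) {S T : Set (ℕ → O)} (h : S ⊆ T) :
    cylContent g S ≤ cylContent g T :=
  iSup_mono fun k => measure_mono (cylWords_mono h k)

lemma biUnion_concat_cylWords_subset (S : Set (ℕ → O)) (k : ℕ) :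
    ⋃ b ∈ cylWords S k, range (fun c : O => b ++ [c]) ⊆ cylWords S (k + 1) := by
  simp only [iUnion_subset_iff]
  rintro b ⟨hlen, hsub⟩ _ ⟨c, rfl⟩
  exact ⟨by simp [hlen], fun x hx => hsub (mem_cylinder_concat.mp hx).1⟩

lemma cylWords_succ {S : Set (ℕ → O)} {k : ℕ} (hS : DependsOn (· ∈ S) (Iio k)) :
    cylWords S (k + 1) = ⋃ b ∈ cylWords S k, range (fun c : O => b ++ [c]) := by
  refine Subset.antisymm ?_ (biUnion_concat_cylWords_subset S k)
  rintro w ⟨hlen, hsub⟩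
  have hw : w ≠ [] := List.ne_nil_of_length_pos (by omega)
  have hdrop : w.dropLast.length = k := by simp [hlen]
  rw [← List.dropLast_append_getLast hw] at hsub ⊢
  refine mem_biUnion (x := w.dropLast) ⟨hdrop, fun y hy => ?_⟩ (mem_range_self _)
  -- `y` agrees on its first `k` letters with a point of `cylinder w ⊆ S`
  have hz : Function.update y k (w.getLast hw) ∈ S :=
    hsub (mem_cylinder_concat.mpr ⟨fun i hi => by
      rw [Function.update_of_ne (by omega)]; exact hy i hi, by simp [hdrop]⟩)
  exact (hS fun i (hi : i < k) => by simp [Function.update, hi.ne]).mp hz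

lemma wordWeight_cylWords_le_succ [Countable O] {g : List O → ℝ} (hg0 : ∀ b, 0 ≤ g b)
    (hg : ∀ b, HasSum (fun c : O => g (b ++ [c])) (g b)) (S : Set (ℕ → O)) (k : ℕ) :
    wordWeight g (cylWords S k) ≤ wordWeight g (cylWords S (k + 1)) := by
  rw [← wordWeight_biUnion_concat hg0 hg]
  exact measure_mono (biUnion_concat_cylWords_subset S k)

lemma wordWeight_cylWords_of_le [Countable O] {g : List O → ℝ} (hg0 : ∀ b, 0 ≤ g b)
    (hg : ∀ b, HasSum (fun c : O => g (b ++ [c])) (g b)) {S : Set (ℕ → O)} {k j : ℕ}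
    (hS : DependsOn (· ∈ S) (Iio k)) (hkj : k ≤ j) :
    wordWeight g (cylWords S j) = wordWeight g (cylWords S k) := by
  induction j, hkj using Nat.le_induction with
  | base => rfl
  | succ j hkj ih =>
    rw [cylWords_succ (hS.mono (Iio_subset_Iio hkj)), wordWeight_biUnion_concat hg0 hg, ih]

lemma cylContent_eq [Countable O] {g : List O → ℝ} (hg0 : ∀ b, 0 ≤ g b)
    (hg : ∀ b, HasSum (fun c : O => g (b ++ [c])) (g b)) {S : Set (ℕ → O)} {k : ℕ}
    (hS : DependsOn (· ∈ S) (Iio k)) :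
    cylContent g S = wordWeight g (cylWords S k) := by
  refine le_antisymm (iSup_le fun j => ?_) (le_iSup (fun j => wordWeight g (cylWords S j)) k)
  calc wordWeight g (cylWords S j)
      ≤ wordWeight g (cylWords S (max j k)) :=
        monotone_nat_of_le_succ (wordWeight_cylWords_le_succ hg0 hg S) (le_max_left j k)
    _ = wordWeight g (cylWords S k) := wordWeight_cylWords_of_le hg0 hg hS (le_max_right j k)

section Nonempty

variable [Nonempty O]

lemma cylWords_biUnion_cylinder {K : Set (List O)} {k : ℕ} (hK : ∀ b ∈ K, b.length = k) :
    cylWords (⋃ b ∈ K, cylinder b) k = K := by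
  refine Subset.antisymm (fun b ⟨hlen, hsub⟩ => ?_) fun b hb => ⟨hK b hb, subset_biUnion_of_mem hb⟩
  obtain ⟨x, hx⟩ := cylinder_nonempty b
  obtain ⟨b', hb', hxb'⟩ := mem_iUnion₂.mp (hsub hx)
  rwa [eq_of_mem_cylinder (hlen.trans (hK b' hb').symm) hx hxb']

lemma cylWords_biUnion {ι : Type*} {s : Set ι} {A : ι → Set (ℕ → O)} {k : ℕ}
    (hA : ∀ i ∈ s, DependsOn (· ∈ A i) (Iio k)) :
    cylWords (⋃ i ∈ s, A i) k = ⋃ i ∈ s, cylWords (A i) k := by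
  refine Subset.antisymm (fun b ⟨hlen, hsub⟩ => ?_)
    (iUnion₂_subset fun i hi => cylWords_mono (subset_biUnion_of_mem hi) k)
  obtain ⟨x, hx⟩ := cylinder_nonempty b
  obtain ⟨i, hi, hxi⟩ := mem_iUnion₂.mp (hsub hx)
  exact mem_biUnion hi ⟨hlen, cylinder_subset_of_mem (hlen ▸ hA i hi) hx hxi⟩

lemma cylWords_union {S T : Set (ℕ → O)} {k : ℕ} (hS : DependsOn (· ∈ S) (Iio k))
    (hT : DependsOn (· ∈ T) (Iio k)) : cylWords (S ∪ T) k = cylWords S k ∪ cylWords T k := by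
  refine Subset.antisymm (fun b ⟨hlen, hsub⟩ => ?_)
    (union_subset (cylWords_mono subset_union_left k) (cylWords_mono subset_union_right k))
  obtain ⟨x, hx⟩ := cylinder_nonempty b
  rcases hsub hx with hxS | hxT
  · exact .inl ⟨hlen, cylinder_subset_of_mem (hlen ▸ hS) hx hxS⟩
  · exact .inr ⟨hlen, cylinder_subset_of_mem (hlen ▸ hT) hx hxT⟩

lemma disjoint_cylWords {S T : Set (ℕ → O)} (h : Disjoint S T) (k : ℕ) :
    Disjoint (cylWords S k) (cylWords T k) := by
  refine disjoint_left.mpr fun b hS hT => ?_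
  obtain ⟨x, hx⟩ := cylinder_nonempty b
  exact disjoint_left.mp h (hS.2 hx) (hT.2 hx)

end Nonempty

section Content

variable [Countable O] [Nonempty O] {g : List O → ℝ}

lemma cylContent_biUnion_cylinder (hg0 : ∀ b, 0 ≤ g b)
    (hg : ∀ b, HasSum (fun c : O => g (b ++ [c])) (g b)) {K : Set (List O)} {k : ℕ}
    (hK : ∀ b ∈ K, b.length = k) :
    cylContent g (⋃ b ∈ K, cylinder b) = ∑' b : K, ENNReal.ofReal (g b) := by
  rw [cylContent_eq hg0 hg (dependsOn_mem_biUnion_cylinder hK),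
    cylWords_biUnion_cylinder hK, wordWeight_apply]

lemma cylContent_univ (hg0 : ∀ b, 0 ≤ g b)
    (hg : ∀ b, HasSum (fun c : O => g (b ++ [c])) (g b)) :
    cylContent g univ = ENNReal.ofReal (g []) := by
  simpa [cylinder_nil] using cylContent_biUnion_cylinder hg0 hg (K := {[]}) (k := 0) (by simp)

lemma cylContent_empty (hg0 : ∀ b, 0 ≤ g b)
    (hg : ∀ b, HasSum (fun c : O => g (b ++ [c])) (g b)) :
    cylContent g ∅ = 0 := by
  simpa using cylContent_biUnion_cylinder hg0 hg (K := ∅) (k := 0) (by simp)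

lemma cylContent_lt_top (hg0 : ∀ b, 0 ≤ g b)
    (hg : ∀ b, HasSum (fun c : O => g (b ++ [c])) (g b)) (S : Set (ℕ → O)) :
    cylContent g S < ⊤ :=
  ((cylContent_mono g (subset_univ S)).trans_eq (cylContent_univ hg0 hg)).trans_lt
    ENNReal.ofReal_lt_top

lemma cylContent_union_le (hg0 : ∀ b, 0 ≤ g b)
    (hg : ∀ b, HasSum (fun c : O => g (b ++ [c])) (g b)) {S T : Set (ℕ → O)} {k : ℕ}
    (hS : DependsOn (· ∈ S) (Iio k)) (hT : DependsOn (· ∈ T) (Iio k)) :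
    cylContent g (S ∪ T) ≤ cylContent g S + cylContent g T := by
  have hST : DependsOn (· ∈ S ∪ T) (Iio k) := fun x y h => by simp only [mem_union, hS h, hT h]
  rw [cylContent_eq hg0 hg hST, cylWords_union hS hT, cylContent_eq hg0 hg hS,
    cylContent_eq hg0 hg hT]
  exact measure_union_le _ _

lemma cylContent_biUnion_finset_le (hg0 : ∀ b, 0 ≤ g b)
    (hg : ∀ b, HasSum (fun c : O => g (b ++ [c])) (g b)) {ι : Type*} (s : Finset ι)
    {A : ι → Set (ℕ → O)} {k : ℕ} (hA : ∀ i ∈ s, DependsOn (· ∈ A i) (Iio k)) :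
    cylContent g (⋃ i ∈ s, A i) ≤ ∑ i ∈ s, cylContent g (A i) := by
  rw [← Finset.set_biUnion_coe, cylContent_eq hg0 hg (dependsOn_mem_biUnion hA),
    cylWords_biUnion hA]
  exact (measure_biUnion_finset_le s _).trans
    (Finset.sum_le_sum fun i hi => (cylContent_eq hg0 hg (hA i hi)).ge)

lemma cylContent_biUnion_finset (hg0 : ∀ b, 0 ≤ g b)
    (hg : ∀ b, HasSum (fun c : O => g (b ++ [c])) (g b)) {ι : Type*} (s : Finset ι)
    {A : ι → Set (ℕ → O)} {k : ℕ} (hA : ∀ i ∈ s, DependsOn (· ∈ A i) (Iio k))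
    (hd : (s : Set ι).PairwiseDisjoint A) :
    cylContent g (⋃ i ∈ s, A i) = ∑ i ∈ s, cylContent g (A i) := by
  rw [← Finset.set_biUnion_coe, cylContent_eq hg0 hg (dependsOn_mem_biUnion hA),
    cylWords_biUnion hA, Finset.set_biUnion_coe,
    measure_biUnion_finset (fun i hi j hj hij => disjoint_cylWords (hd hi hj hij) k)
      fun _ _ => .of_discrete]
  exact Finset.sum_congr rfl fun i hi => (cylContent_eq hg0 hg (hA i hi)).symm

lemma tendsto_cylContent_iInter (hg0 : ∀ b, 0 ≤ g b)
    (hg : ∀ b, HasSum (fun c : O => g (b ++ [c])) (g b)) {S : ℕ → Set (ℕ → O)} {k : ℕ}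
    (hS : ∀ n, DependsOn (· ∈ S n) (Iio k)) (hanti : Antitone S) :
    Tendsto (fun n => cylContent g (S n)) atTop (𝓝 (cylContent g (⋂ n, S n))) := by
  have hcyl : cylWords (⋂ n, S n) k = ⋂ n, cylWords (S n) k := by
    ext b
    simp [cylWords, subset_iInter_iff, forall_and]
  simp_rw [cylContent_eq hg0 hg (hS _), cylContent_eq hg0 hg (dependsOn_mem_iInter hS), hcyl]
  refine tendsto_measure_iInter_atTop (fun _ => MeasurableSet.of_discrete.nullMeasurableSet)
    (fun m n hmn => cylWords_mono (hanti hmn) k) ⟨0, ?_⟩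
  rw [← cylContent_eq hg0 hg (hS 0)]
  exact (cylContent_lt_top hg0 hg _).ne

lemma exists_finset_cylContent_apply_notMem_le (hg0 : ∀ b, 0 ≤ g b)
    (hg : ∀ b, HasSum (fun c : O => g (b ++ [c])) (g b)) (i : ℕ) {δ : ENNReal} (hδ : 0 < δ) :
    ∃ F : Finset O, cylContent g {x | x i ∉ F} ≤ δ := by
  classical
  obtain ⟨e, he⟩ := exists_surjective_nat O
  let S : ℕ → Set (ℕ → O) := fun n => {x | x i ∉ (Finset.range n).image e}
  have hS : ∀ n, DependsOn (· ∈ S n) (Iio (i + 1)) := fun n x y hxy => by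
    simp [S, hxy i (Nat.lt_succ_self i)]
  have hanti : Antitone S := fun m n hmn x hx hxm =>
    hx (Finset.image_subset_image (Finset.range_subset_range.mpr hmn) hxm)
  have hempty : ⋂ n, S n = ∅ := eq_empty_of_forall_notMem fun x hx => by
    obtain ⟨m, hm⟩ := he (x i)
    exact mem_iInter.mp hx (m + 1) (Finset.mem_image.mpr ⟨m, by simp, hm⟩)
  have hlim := tendsto_cylContent_iInter hg0 hg hS hanti
  rw [hempty, cylContent_empty hg0 hg] at hlim
  obtain ⟨n, hn⟩ := (hlim.eventually (ge_mem_nhds hδ)).exists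
  exact ⟨_, hn⟩

lemma cylContent_le_tsum_of_subset_iUnion (hg0 : ∀ b, 0 ≤ g b)
    (hg : ∀ b, HasSum (fun c : O => g (b ++ [c])) (g b)) {S : Set (ℕ → O)} {k : ℕ}
    (hS : DependsOn (· ∈ S) (Iio k)) {A : ℕ → Set (ℕ → O)} {kA : ℕ → ℕ}
    (hA : ∀ n, DependsOn (· ∈ A n) (Iio (kA n))) (hcover : S ⊆ ⋃ n, A n) :
    cylContent g S ≤ ∑' n, cylContent g (A n) := by
  classical
  refine ENNReal.le_of_forall_pos_le_add fun ε hε _ => ?_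
  obtain ⟨δ, hδ, hδε⟩ :=
    ENNReal.exists_pos_sum_of_countable' (ENNReal.coe_ne_zero.mpr hε.ne') ℕ
  choose F₀ hF₀ using fun i => exists_finset_cylContent_apply_notMem_le hg0 hg i (hδ i)
  let F : ℕ → Finset O := fun i => insert (Classical.arbitrary O) (F₀ i)
  have hF : ∀ i, cylContent g {x | x i ∉ F i} ≤ δ i := fun i =>
    (cylContent_mono g fun x (hx : x i ∉ F i) h => hx (Finset.mem_insert_of_mem h)).trans (hF₀ i)
  obtain ⟨N, M, hNM, hcov⟩ :=
    exists_finset_subset_biUnion_union (fun i => Finset.insert_nonempty _ _) hS hA hcover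
  have hAM : ∀ n ∈ N, DependsOn (· ∈ A n) (Iio M) :=
    fun n hn => (hA n).mono (Iio_subset_Iio (hNM n hn))
  have hFM : ∀ i ∈ Finset.range M, DependsOn (· ∈ {x : ℕ → O | x i ∉ F i}) (Iio M) :=
    fun i hi x y hxy => by simp [hxy i (Finset.mem_range.mp hi)]
  calc cylContent g S
      ≤ cylContent g ((⋃ n ∈ N, A n) ∪ ⋃ i ∈ Finset.range M, {x | x i ∉ F i}) :=
        cylContent_mono g hcov
    _ ≤ cylContent g (⋃ n ∈ N, A n) + cylContent g (⋃ i ∈ Finset.range M, {x | x i ∉ F i}) :=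
        cylContent_union_le hg0 hg (dependsOn_mem_biUnion hAM) (dependsOn_mem_biUnion hFM)
    _ ≤ ∑ n ∈ N, cylContent g (A n) + ∑ i ∈ Finset.range M, δ i :=
        add_le_add (cylContent_biUnion_finset_le hg0 hg N hAM)
          ((cylContent_biUnion_finset_le hg0 hg _ hFM).trans (Finset.sum_le_sum fun i _ => hF i))
    _ ≤ ∑' n, cylContent g (A n) + ε :=
        add_le_add (ENNReal.sum_le_tsum N) ((ENNReal.sum_le_tsum _).trans hδε.le)

lemma tsum_cylContent_le_of_pairwise_disjoint (hg0 : ∀ b, 0 ≤ g b)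
    (hg : ∀ b, HasSum (fun c : O => g (b ++ [c])) (g b)) {A : ℕ → Set (ℕ → O)} {kA : ℕ → ℕ}
    (hA : ∀ n, DependsOn (· ∈ A n) (Iio (kA n))) (hd : Pairwise (Function.onFun Disjoint A)) :
    ∑' n, cylContent g (A n) ≤ cylContent g (⋃ n, A n) := by
  rw [ENNReal.tsum_eq_iSup_sum]
  refine iSup_le fun s => ?_
  have hAs : ∀ n ∈ s, DependsOn (· ∈ A n) (Iio (s.sup kA)) :=
    fun n hn => (hA n).mono (Iio_subset_Iio (Finset.le_sup hn))
  rw [← cylContent_biUnion_finset hg0 hg s hAs (hd.set_pairwise _)]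
  exact cylContent_mono g (iUnion₂_subset_iUnion _ _)

end Content

end CylinderContent

open CylinderContent in
theorem stmt4 {O : Type*} [Countable O] [Nonempty O] (g : List O → ℝ)
    (hg0 : ∀ b, 0 ≤ g b) (hge : g [] ≤ 1)
    (hgcons : ∀ b : List O, HasSum (fun c : O => g (b ++ [c])) (g b)) :
    ∃ μ : Set (ℕ → O) → ENNReal,
      (∀ (k : ℕ) (K : Set (List O)), (∀ b ∈ K, b.length = k) →
        μ (⋃ b ∈ K, cylinder b) = ∑' b : K, ENNReal.ofReal (g b)) ∧
      (∀ A : ℕ → Set (ℕ → O),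
        (∀ n, A n ∈ cylAlg O) → Pairwise (Function.onFun Disjoint A) →
        (⋃ n, A n) ∈ cylAlg O →
        μ (⋃ n, A n) = ∑' n, μ (A n)) ∧
      μ Set.univ ≤ 1 := by
  refine ⟨cylContent g, fun k K hK => cylContent_biUnion_cylinder hg0 hgcons hK,
    fun A hA hd hU => ?_, ?_⟩
  · choose kA hkA using fun n => dependsOn_of_mem_cylAlg (hA n)
    obtain ⟨k, hk⟩ := dependsOn_of_mem_cylAlg hU
    exact le_antisymm (cylContent_le_tsum_of_subset_iUnion hg0 hgcons hk hkA subset_rfl)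
      (tsum_cylContent_le_of_pairwise_disjoint hg0 hgcons hkA hd)
  · rw [cylContent_univ hg0 hgcons]
    exact ENNReal.ofReal_le_one.mpr hge
end

section
/- The map φ : 𝒢 → L²(μ_ε) sending each future-distribution function g_ā to the equivalence class of its Radon–Nikodym density γ(g_ā), extended linearly, is injective: if Σ_{ā∈Λ} α_ā γ(g_ā) = 0 μ_ε-almost everywhere (finite linear combination), then Σ_{ā∈Λ} α_ā g_ā = 0 identically on O*. -/
open MeasureTheory

theorem stmt10_general {O : Type*}
    [m : MeasurableSpace (ℕ → O)]
    (με : Measure (ℕ → O))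
    (g : List O → List O → ℝ)
    (γ : List O → (ℕ → O) → ℝ)
    (hγi : ∀ c, Integrable (γ c) με)
    (hdens : ∀ c w, ∫ x in cylinder w, γ c x ∂με = g c w)
    (Λ : Finset (List O)) (α : List O → ℝ)
    (hzero : ∀ᵐ x ∂με, ∑ c ∈ Λ, α c * γ c x = 0) :
    ∀ w : List O, ∑ c ∈ Λ, α c * g c w = 0 := by
  intro w
  calc ∑ c ∈ Λ, α c * g c w
      = ∫ x in cylinder w, ∑ c ∈ Λ, α c * γ c x ∂με := by
        rw [integral_finsetSum _ fun c _ => (hγi c).restrict.const_mul (α c)]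
        simp only [integral_const_mul, hdens]
    _ = 0 := integral_eq_zero_of_ae (ae_restrict_of_ae hzero)

theorem stmt10 {O : Type*} [Countable O] [Nonempty O]
    [m : MeasurableSpace (ℕ → O)]
    (hm : m = MeasurableSpace.generateFrom {S | ∃ w : List O, S = cylinder w})
    (με : Measure (ℕ → O)) [IsFiniteMeasure με]
    (g : List O → List O → ℝ)
    (γ : List O → (ℕ → O) → ℝ)
    (hγm : ∀ c, Measurable (γ c)) (hγi : ∀ c, Integrable (γ c) με)
    (hdens : ∀ c w, ∫ x in cylinder w, γ c x ∂με = g c w)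
    (Λ : Finset (List O)) (α : List O → ℝ)
    (hzero : ∀ᵐ x ∂με, ∑ c ∈ Λ, α c * γ c x = 0) :
    ∀ w : List O, ∑ c ∈ Λ, α c * g c w = 0 :=
  stmt10_general (m := m) με g γ hγi hdens Λ α hzero
end

section
/- Fundamental theorem of OOMs: for any observation symbols a₁,...,a_n ∈ O, the probability ℙ(a₁...a_n) equals σ(t_{a_n} ∘ ... ∘ t_{a₁} (g_ε)), where the observable operators satisfy t_a(g_b̄) = ℙ(a|b̄)·g_{b̄a} for words b̄ with ℙ(b̄) ≠ 0, and σ is evaluation at the empty word (σ(g_b̄) = 1 if ℙ(b̄) ≠ 0 and 0 otherwise). -/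
theorem stmt11 {O : Type*} (P : List O → ℝ)
    (hP0 : ∀ b, 0 ≤ P b) (hPe : P [] = 1)
    (hmono : ∀ b w, P (b ++ w) ≤ P b)
    (g : List O → List O → ℝ)
    (hgdef : ∀ b w, g b w = if P b = 0 then 0 else P (b ++ w) / P b)
    (t : O → ((List O → ℝ) →ₗ[ℝ] (List O → ℝ)))
    (ht : ∀ (a : O) (b : List O), P b ≠ 0 → t a (g b) = g b [a] • g (b ++ [a])) :
    ∀ as : List O, P as = (as.foldl (fun v a => t a v) (g [])) [] := by
  have key : ∀ as : List O,
      (as.foldl (fun v a => t a v) (g [])) = P as • g as := by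
    intro as
    induction as using List.reverseRecOn with
    | nil => simp [hPe]
    | append_singleton as a ih =>
        rw [List.foldl_append, List.foldl_cons, List.foldl_nil, ih, map_smul]
        by_cases h : P as = 0
        · have h2 : P (as ++ [a]) = 0 :=
            le_antisymm (h ▸ hmono as [a]) (hP0 _)
          simp [h, h2]
        · rw [ht a as h, hgdef as [a], if_neg h, smul_smul,
            mul_div_cancel₀ _ h]
  intro as
  rw [key as]
  by_cases h : P as = 0
  · simp [h, hgdef, Pi.smul_apply]
  · simp [hgdef, if_neg h, Pi.smul_apply, smul_eq_mul, div_self h]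
end

section
/- The well-definedness of observable operators is basis independent: if {g_ā}_{ā∈Λ} is any Hamel basis of 𝒢 consisting of future-distribution functions, and t_a is defined on this basis by t_a(g_c̄) = ℙ(a|c̄) g_{c̄a} and extended linearly, then for every b̄ ∈ O* with ℙ(b̄) ≠ 0 one has t_a(g_b̄) = ℙ(a|b̄) g_{b̄a}; hence any two such bases yield the same operator. -/
/-! Conditioning on `b` and then on one more symbol `a` is the same as conditioning on `b` and
reading the future from after `a`: `ℙ(a|b) ℙ(w|ba) = ℙ(aw|b)` (when `ℙ(ba) = 0`, monotonicity
forces `ℙ(baw) = 0`). So `g_b [a] • g_{ba}` is the shift `w ↦ g_b (a :: w)` of `g_b`, for every `b`.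
On the basis `t_a` is this shift by definition; both being linear, they agree on the span, which
contains every `g_b`. -/

section

variable {O : Type*}

noncomputable def condFuture (P : List O → ℝ) (b w : List O) : ℝ :=
  if P b = 0 then 0 else P (b ++ w) / P b

theorem condFuture_mul_condFuture_append {P : List O → ℝ} (hP0 : ∀ b, 0 ≤ P b)
    (hmono : ∀ b w, P (b ++ w) ≤ P b) (b : List O) (a : O) (w : List O) :
    condFuture P b [a] * condFuture P (b ++ [a]) w = condFuture P b (a :: w) := by
  unfold condFuture
  by_cases hb : P b = 0
  · simp [hb]
  by_cases hba : P (b ++ [a]) = 0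
  · have hbaw : P (b ++ a :: w) = 0 := by
      refine le_antisymm ?_ (hP0 _)
      simpa [hba] using hmono (b ++ [a]) w
    simp [hba, hbaw]
  · simp only [hb, hba, if_false, List.append_assoc, List.singleton_append]
    field_simp

theorem condFuture_smul_condFuture_append {P : List O → ℝ} (hP0 : ∀ b, 0 ≤ P b)
    (hmono : ∀ b w, P (b ++ w) ≤ P b) (b : List O) (a : O) :
    condFuture P b [a] • condFuture P (b ++ [a]) =
      LinearMap.funLeft ℝ ℝ (List.cons a) (condFuture P b) := by
  funext w
  exact condFuture_mul_condFuture_append hP0 hmono b a w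

end

theorem stmt13_general {O : Type*} (P : List O → ℝ)
    (hP0 : ∀ b, 0 ≤ P b)
    (hmono : ∀ b w, P (b ++ w) ≤ P b)
    (g : List O → List O → ℝ)
    (hgdef : ∀ b w, g b w = if P b = 0 then 0 else P (b ++ w) / P b)
    (a : O) (Λ : Set (List O))
    (hspan : Submodule.span ℝ (g '' Λ) = Submodule.span ℝ (Set.range g))
    (t : (List O → ℝ) →ₗ[ℝ] (List O → ℝ))
    (ht : ∀ b ∈ Λ, t (g b) = g b [a] • g (b ++ [a])) :
    ∀ b : List O, P b ≠ 0 → t (g b) = g b [a] • g (b ++ [a]) := by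
  obtain rfl : g = condFuture P := funext₂ hgdef
  have hshift : Set.EqOn t (LinearMap.funLeft ℝ ℝ (List.cons a)) (condFuture P '' Λ) := by
    rintro _ ⟨c, hc, rfl⟩
    rw [ht c hc, condFuture_smul_condFuture_append hP0 hmono]
  intro b _
  have hb : condFuture P b ∈ Submodule.span ℝ (condFuture P '' Λ) :=
    hspan ▸ Submodule.subset_span ⟨b, rfl⟩
  rw [LinearMap.eqOn_span hshift hb, condFuture_smul_condFuture_append hP0 hmono]

theorem stmt13 {O : Type*} (P : List O → ℝ)
    (hP0 : ∀ b, 0 ≤ P b)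
    (hmono : ∀ b w, P (b ++ w) ≤ P b)
    (g : List O → List O → ℝ)
    (hgdef : ∀ b w, g b w = if P b = 0 then 0 else P (b ++ w) / P b)
    (a : O) (Λ : Set (List O))
    (hspan : Submodule.span ℝ (g '' Λ) = Submodule.span ℝ (Set.range g))
    (hindep : LinearIndependent ℝ (fun b : Λ => g b.1))
    (t : (List O → ℝ) →ₗ[ℝ] (List O → ℝ))
    (ht : ∀ b ∈ Λ, t (g b) = g b [a] • g (b ++ [a])) :
    ∀ b : List O, P b ≠ 0 → t (g b) = g b [a] • g (b ++ [a]) :=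
  stmt13_general P hP0 hmono g hgdef a Λ hspan t ht
end

section
/- Under the assumption that for all c̄ ∈ O* and μ_ε-almost all infinite sequences ã the limit lim_{k→∞} g_c̄(ã^k)/g_ε(ã^k) exists (where ã^k is the length-k prefix), the Radon–Nikodym density of μ_c̄ with respect to μ_ε is given μ_ε-almost everywhere by γ(g_c̄)(ã) = lim_{k→∞} g_c̄(ã^k)/g_ε(ã^k). -/
/-!
Let `F k x = gc (x^k) / ge (x^k)`, where `x^k` is the length-`k` prefix of `x`. Since
`pc * gc ≤ ge`, the functions `F k` are bounded by `pc⁻¹`. Splitting a cylinder into its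
one-letter extensions and using the consistency of `gc`, the integral of `F k` against `με`
over the cylinder of `w` equals `gc w` as soon as `k ≥ |w|`. By dominated convergence the
a.e. limit `L` of the `F k` has the same cylinder integrals as the density `γ`, and since the
cylinders form a π-system generating the σ-algebra, `L = γ` almost everywhere.
-/

open MeasureTheory Filter

/-- The length-`k` prefix of an infinite sequence, as a finite word. -/
def wordPrefix {O : Type*} (x : ℕ → O) (k : ℕ) : List O := (List.range k).map x

open Topology

section Cylinder

variable {O : Type*}

@[simp]
lemma cylinder_nil : cylinder ([] : List O) = Set.univ := by
  ext x; simp [_root_.cylinder]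

@[simp]
lemma length_wordPrefix (x : ℕ → O) (k : ℕ) : (wordPrefix x k).length = k := by
  simp [wordPrefix]

lemma mem_cylinder_iff_wordPrefix_eq {x : ℕ → O} {w : List O} :
    x ∈ cylinder w ↔ wordPrefix x w.length = w := by
  simp [_root_.cylinder, wordPrefix, List.ext_getElem_iff]

lemma cylinder_eq_iUnion_append (w : List O) :
    cylinder w = ⋃ c : O, cylinder (w ++ [c]) := by
  ext x
  simp only [_root_.cylinder, Set.mem_iUnion, Set.mem_ofPred_eq, List.get_eq_getElem,
    List.length_append, List.length_singleton]
  constructor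
  · intro h
    refine ⟨x w.length, fun i hi => ?_⟩
    rcases (Nat.lt_succ_iff.mp hi).lt_or_eq with hi | rfl
    · rw [List.getElem_append_left hi]; exact h i hi
    · simp
  · rintro ⟨c, hc⟩ i hi
    rw [hc i (by omega), List.getElem_append_left hi]

lemma pairwise_disjoint_cylinder_append (w : List O) :
    Pairwise (Function.onFun Disjoint fun c : O => cylinder (w ++ [c])) := by
  intro c c' hcc'
  refine Set.disjoint_left.mpr fun x hx hx' => hcc' ?_
  have hc := hx w.length (by simp)
  have hc' := hx' w.length (by simp)
  simp only [List.get_eq_getElem, List.getElem_concat_length] at hc hc'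
  rw [← hc, ← hc']

lemma cylinder_subset_of_mem {x : ℕ → O} {w v : List O} (hwv : w.length ≤ v.length)
    (hw : x ∈ cylinder w) (hv : x ∈ cylinder v) : cylinder v ⊆ cylinder w := by
  intro y hy i hi
  rw [hy i (hi.trans_le hwv), ← hv i (hi.trans_le hwv), hw i hi]

lemma isPiSystem_cylinder : IsPiSystem {S : Set (ℕ → O) | ∃ w : List O, S = cylinder w} := by
  rintro _ ⟨w, rfl⟩ _ ⟨v, rfl⟩ ⟨x, hw, hv⟩
  rcases le_total w.length v.length with h | h
  · exact ⟨v, Set.inter_eq_self_of_subset_right (cylinder_subset_of_mem h hw hv)⟩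
  · exact ⟨w, Set.inter_eq_self_of_subset_left (cylinder_subset_of_mem h hv hw)⟩

end Cylinder

section Integral

variable {O : Type*} [MeasurableSpace (ℕ → O)] {μ : Measure (ℕ → O)}
  {E : Type*} [NormedAddCommGroup E] [NormedSpace ℝ E]

lemma measurable_comp_wordPrefix [Countable O] (hcyl : ∀ w : List O, MeasurableSet (cylinder w))
    {β : Type*} [MeasurableSpace β] (f : List O → β) (k : ℕ) :
    Measurable fun x => f (wordPrefix x k) := by
  let _ : MeasurableSpace (List O) := ⊤
  have hprefix : Measurable fun x : ℕ → O => wordPrefix x k := by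
    refine measurable_to_countable' fun w => ?_
    by_cases hw : w.length = k
    · subst hw
      convert hcyl w using 1
      ext x
      exact mem_cylinder_iff_wordPrefix_eq.symm
    · convert MeasurableSet.empty
      ext x
      simp only [Set.mem_preimage, Set.mem_singleton_iff, Set.mem_empty_iff_false, iff_false]
      rintro rfl
      exact hw (length_wordPrefix x k)
  exact measurable_from_top.comp hprefix

lemma setIntegral_cylinder_eq_tsum [Countable O] (hcyl : ∀ w : List O, MeasurableSet (cylinder w))
    {f : (ℕ → O) → E} (hf : Integrable f μ) (w : List O) :
    ∫ x in cylinder w, f x ∂μ = ∑' c, ∫ x in cylinder (w ++ [c]), f x ∂μ := by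
  rw [cylinder_eq_iUnion_append w,
    integral_iUnion (fun _ => hcyl _) (pairwise_disjoint_cylinder_append w) hf.integrableOn]

lemma setIntegral_cylinder_comp_wordPrefix_length [CompleteSpace E] {w : List O}
    (hw : MeasurableSet (cylinder w)) (F : List O → E) :
    ∫ x in cylinder w, F (wordPrefix x w.length) ∂μ = μ.real (cylinder w) • F w := by
  rw [setIntegral_congr_fun hw fun x hx => by rw [mem_cylinder_iff_wordPrefix_eq.mp hx],
    setIntegral_const]

lemma setIntegral_cylinder_div_wordPrefix [Countable O]
    (hcyl : ∀ w : List O, MeasurableSet (cylinder w)) {gc ge : List O → ℝ}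
    (hge0 : ∀ w, 0 ≤ ge w) (hzero : ∀ w, ge w = 0 → gc w = 0)
    (hgccons : ∀ w : List O, HasSum (fun c : O => gc (w ++ [c])) (gc w))
    (hμ : ∀ w : List O, μ (cylinder w) = ENNReal.ofReal (ge w))
    (hint : ∀ k, Integrable (fun x => gc (wordPrefix x k) / ge (wordPrefix x k)) μ)
    {w : List O} {k : ℕ} (hk : w.length ≤ k) :
    ∫ x in cylinder w, gc (wordPrefix x k) / ge (wordPrefix x k) ∂μ = gc w := by
  obtain ⟨n, hn⟩ := Nat.exists_eq_add_of_le hk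
  induction n generalizing w with
  | zero =>
    subst hn
    rw [add_zero, setIntegral_cylinder_comp_wordPrefix_length (hcyl w) fun v => gc v / ge v,
      smul_eq_mul, measureReal_def, hμ, ENNReal.toReal_ofReal (hge0 w)]
    rcases eq_or_ne (ge w) 0 with h | h
    · simp [h, hzero w h]
    · exact mul_div_cancel₀ _ h
  | succ n ih =>
    rw [setIntegral_cylinder_eq_tsum hcyl (hint k), ← (hgccons w).tsum_eq]
    exact tsum_congr fun c => ih (by simp; omega) (by simp; omega)

end Integral

lemma norm_div_le_inv_of_mul_le {a b p : ℝ} (ha : 0 ≤ a) (hb : 0 ≤ b) (hp : 0 < p)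
    (h : p * a ≤ b) : ‖a / b‖ ≤ p⁻¹ := by
  rw [Real.norm_of_nonneg (div_nonneg ha hb)]
  rcases hb.eq_or_lt with rfl | hb
  · simp [hp.le]
  · rw [div_le_iff₀ hb, inv_mul_eq_div, le_div_iff₀' hp]
    exact h

lemma integral_eq_of_tendsto_of_eventually_integral_eq {α : Type*} [MeasurableSpace α]
    {μ : Measure α} [IsFiniteMeasure μ] {ι : Type*} {l : Filter ι} [l.IsCountablyGenerated]
    [l.NeBot] {F : ι → α → ℝ} {L : α → ℝ} {C a : ℝ}
    (hFm : ∀ k, AEStronglyMeasurable (F k) μ) (hFb : ∀ k x, ‖F k x‖ ≤ C)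
    (hFL : ∀ᵐ x ∂μ, Tendsto (fun k => F k x) l (𝓝 (L x)))
    (hF : ∀ᶠ k in l, ∫ x, F k x ∂μ = a) :
    ∫ x, L x ∂μ = a :=
  tendsto_nhds_unique
    (tendsto_integral_filter_of_dominated_convergence (fun _ => C) (.of_forall hFm)
      (.of_forall fun k => .of_forall (hFb k)) (integrable_const C) hFL)
    (tendsto_const_nhds.congr' (hF.mono fun _ hk => hk.symm))

lemma ae_eq_of_setIntegral_eq_of_isPiSystem {α : Type*} {m : MeasurableSpace α}
    {μ : Measure α} {E : Type*} [NormedAddCommGroup E] [NormedSpace ℝ E] [CompleteSpace E]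
    {C : Set (Set α)} (hgen : m = MeasurableSpace.generateFrom C) (hC : IsPiSystem C)
    (huniv : Set.univ ∈ C) {f g : α → E} (hf : Integrable f μ) (hg : Integrable g μ)
    (hfg : ∀ s ∈ C, ∫ x in s, f x ∂μ = ∫ x in s, g x ∂μ) : f =ᵐ[μ] g := by
  have hCm : ∀ s ∈ C, MeasurableSet s := fun s hs => hgen ▸ .basic s hs
  refine hf.ae_eq_of_withDensityᵥ_eq hg (VectorMeasure.ext_of_generateFrom C (fun s hs => ?_)
    hgen hC ?_)
  · rw [withDensityᵥ_apply hf (hCm s hs), withDensityᵥ_apply hg (hCm s hs), hfg s hs]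
  · rw [withDensityᵥ_apply hf .univ, withDensityᵥ_apply hg .univ, hfg _ huniv]

theorem stmt14_general {O : Type*} [Countable O]
    [m : MeasurableSpace (ℕ → O)]
    (hm : m = MeasurableSpace.generateFrom {S | ∃ w : List O, S = cylinder w})
    (gc ge : List O → ℝ) (hgc0 : ∀ w, 0 ≤ gc w) (hge0 : ∀ w, 0 ≤ ge w)
    (pc : ℝ) (hpc : 0 < pc) (hbound : ∀ w, pc * gc w ≤ ge w)
    (hgccons : ∀ b : List O, HasSum (fun c : O => gc (b ++ [c])) (gc b))
    (μc με : Measure (ℕ → O)) [IsFiniteMeasure με]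
    (hμc : ∀ w : List O, μc (cylinder w) = ENNReal.ofReal (gc w))
    (hμε : ∀ w : List O, με (cylinder w) = ENNReal.ofReal (ge w))
    (γ : (ℕ → O) → ℝ) (hγi : Integrable γ με)
    (hγ : ∀ A : Set (ℕ → O), MeasurableSet A → (μc A).toReal = ∫ x in A, γ x ∂με)
    (hlim : ∀ᵐ x ∂με, ∃ L : ℝ,
      Tendsto (fun k => gc (wordPrefix x k) / ge (wordPrefix x k)) atTop (nhds L)) :
    ∀ᵐ x ∂με,
      Tendsto (fun k => gc (wordPrefix x k) / ge (wordPrefix x k)) atTop (nhds (γ x)) := by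
  have hcyl : ∀ w : List O, MeasurableSet (cylinder w) := fun w =>
    hm ▸ .basic _ ⟨w, rfl⟩
  have hzero : ∀ w, ge w = 0 → gc w = 0 := fun w hw =>
    le_antisymm (by nlinarith [hbound w]) (hgc0 w)
  set F : ℕ → (ℕ → O) → ℝ := fun k x => gc (wordPrefix x k) / ge (wordPrefix x k)
  have hFb : ∀ k x, ‖F k x‖ ≤ pc⁻¹ := fun k x =>
    norm_div_le_inv_of_mul_le (hgc0 _) (hge0 _) hpc (hbound _)
  have hFm : ∀ k, Measurable (F k) := fun k =>
    measurable_comp_wordPrefix hcyl (fun v => gc v / ge v) k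
  have hFi : ∀ k, Integrable (F k) με := fun k =>
    .of_bound (hFm k).aestronglyMeasurable _ (.of_forall (hFb k))
  obtain ⟨L, hLm, hFL⟩ := measurable_limit_of_tendsto_metrizable_ae
    (fun k => (hFm k).aemeasurable) hlim
  have hLi : Integrable L με := .of_bound hLm.aestronglyMeasurable pc⁻¹ <| hFL.mono
    fun x hx => le_of_tendsto' hx.norm fun k => hFb k x
  have hLcyl : ∀ w, ∫ x in cylinder w, L x ∂με = gc w := fun w =>
    integral_eq_of_tendsto_of_eventually_integral_eq
      (fun k => (hFm k).aestronglyMeasurable) hFb (ae_restrict_of_ae hFL)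
      ((eventually_ge_atTop w.length).mono fun k hk =>
        setIntegral_cylinder_div_wordPrefix hcyl hge0 hzero hgccons hμε hFi hk)
  have hγcyl : ∀ w, ∫ x in cylinder w, γ x ∂με = gc w := fun w => by
    rw [← hγ _ (hcyl w), hμc w, ENNReal.toReal_ofReal (hgc0 w)]
  have hLγ : L =ᵐ[με] γ := ae_eq_of_setIntegral_eq_of_isPiSystem hm isPiSystem_cylinder
    ⟨[], cylinder_nil.symm⟩ hLi hγi (by rintro _ ⟨w, rfl⟩; rw [hLcyl, hγcyl])
  filter_upwards [hFL, hLγ] with x hx hxγ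
  rwa [← hxγ]

theorem stmt14 {O : Type*} [Countable O] [Nonempty O]
    [m : MeasurableSpace (ℕ → O)]
    (hm : m = MeasurableSpace.generateFrom {S | ∃ w : List O, S = cylinder w})
    (gc ge : List O → ℝ) (hgc0 : ∀ w, 0 ≤ gc w) (hge0 : ∀ w, 0 ≤ ge w)
    (pc : ℝ) (hpc : 0 < pc) (hbound : ∀ w, pc * gc w ≤ ge w)
    (hgccons : ∀ b : List O, HasSum (fun c : O => gc (b ++ [c])) (gc b))
    (hgecons : ∀ b : List O, HasSum (fun c : O => ge (b ++ [c])) (ge b))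
    (μc με : Measure (ℕ → O)) [IsFiniteMeasure μc] [IsFiniteMeasure με]
    (hμc : ∀ w : List O, μc (cylinder w) = ENNReal.ofReal (gc w))
    (hμε : ∀ w : List O, με (cylinder w) = ENNReal.ofReal (ge w))
    (hμcu : μc Set.univ = ENNReal.ofReal (gc []))
    (hμεu : με Set.univ = ENNReal.ofReal (ge []))
    (γ : (ℕ → O) → ℝ) (hγm : Measurable γ) (hγi : Integrable γ με)
    (hγ : ∀ A : Set (ℕ → O), MeasurableSet A → (μc A).toReal = ∫ x in A, γ x ∂με)
    (hlim : ∀ᵐ x ∂με, ∃ L : ℝ,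
      Tendsto (fun k => gc (wordPrefix x k) / ge (wordPrefix x k)) atTop (nhds L)) :
    ∀ᵐ x ∂με,
      Tendsto (fun k => gc (wordPrefix x k) / ge (wordPrefix x k)) atTop (nhds (γ x)) :=
  stmt14_general (m := m) hm gc ge hgc0 hge0 pc hpc hbound hgccons μc με hμc hμε γ hγi hγ hlim
end

section
/- The observable operators are contractions for the L²-type norm: for each a ∈ O and each g ∈ 𝒢, ‖t_a g‖² = lim_{n→∞} Σ_{ā∈O^n} (t_a g)(ā)²/g_ε(ā) ≤ ‖g‖², assuming all the limits exist. The key chain of estimates is Σ_{ā∈O^n} g(aā)²/g_ε(ā) ≤ Σ_{ā∈O^n} g(aā)²/g_ε(aā) ≤ Σ_{b̄∈O^{n+1}} g(b̄)²/g_ε(b̄), using (t_a g)(ā) = g(aā) and g_ε(aā) ≤ g_ε(ā). -/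
/-! Prepending the letter `a` maps words of length `n` injectively to words of length `n + 1`,
and by stationarity `g_ε(a w) ≤ g_ε(w)`, so each term `g(a w)² / g_ε(w)` is dominated by the
term `g(a w)² / g_ε(a w)` of the `(n + 1)`-st sum. Hence the `n`-th sum defining `‖t_a g‖²` is
at most the `(n + 1)`-st sum defining `‖g‖²`, and the inequality passes to the limit. -/

open Filter

/-- With the convention `x / 0 = 0`, this needs `x = 0` whenever the smaller denominator is. -/
lemma sq_div_le_sq_div_of_le {x d d' : ℝ} (hd' : 0 ≤ d') (hle : d' ≤ d) (hzero : d' = 0 → x = 0) :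
    x ^ 2 / d ≤ x ^ 2 / d' := by
  rcases hd'.eq_or_lt with h0 | hpos
  · simp [hzero h0.symm]
  · exact div_le_div_of_nonneg_left (sq_nonneg x) hpos hle

def consOfLength {O : Type*} (a : O) (n : ℕ) :
    {w : List O // w.length = n} → {w : List O // w.length = n + 1} :=
  fun w => ⟨a :: w.1, by simp [w.2]⟩

lemma consOfLength_injective {O : Type*} (a : O) (n : ℕ) :
    Function.Injective (consOfLength a n) := by
  intro v w h
  exact Subtype.ext (List.cons_injective (congrArg Subtype.val h))

lemma tsum_cons_sq_div_le_tsum_succ {O : Type*} (ge g : List O → ℝ) (a : O)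
    (hge0 : ∀ w, 0 ≤ ge w) (hstat : ∀ w : List O, ge (a :: w) ≤ ge w)
    (hzero : ∀ w : List O, ge w = 0 → g w = 0) (n : ℕ)
    (hsum : Summable (fun w : {w : List O // w.length = n + 1} => g w.1 ^ 2 / ge w.1)) :
    ∑' w : {w : List O // w.length = n}, g (a :: w.1) ^ 2 / ge w.1 ≤
      ∑' w : {w : List O // w.length = n + 1}, g w.1 ^ 2 / ge w.1 := by
  set F := fun w : {w : List O // w.length = n + 1} => g w.1 ^ 2 / ge w.1
  have hF0 : ∀ w, 0 ≤ F w := fun w => div_nonneg (sq_nonneg _) (hge0 _)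
  have hterm : ∀ w : {w : List O // w.length = n},
      g (a :: w.1) ^ 2 / ge w.1 ≤ F (consOfLength a n w) :=
    fun w => sq_div_le_sq_div_of_le (hge0 _) (hstat w.1) (hzero _)
  have hsumF : Summable (F ∘ consOfLength a n) :=
    hsum.comp_injective (consOfLength_injective a n)
  calc ∑' w : {w : List O // w.length = n}, g (a :: w.1) ^ 2 / ge w.1
      ≤ ∑' w, F (consOfLength a n w) :=
        (hsumF.of_nonneg_of_le (fun w => div_nonneg (sq_nonneg _) (hge0 _)) hterm).tsum_le_tsum
          hterm hsumF
    _ ≤ ∑' w, F w := tsum_comp_le_tsum_of_inj hsum hF0 (consOfLength_injective a n)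

theorem stmt16_general {O : Type*} (ge g : List O → ℝ) (a : O)
    (hge0 : ∀ w, 0 ≤ ge w)
    (hstat : ∀ w : List O, ge (a :: w) ≤ ge w)
    (hzero : ∀ w : List O, ge w = 0 → g w = 0)
    (hsum : ∀ n : ℕ, Summable (fun w : {w : List O // w.length = n} => g w.1 ^ 2 / ge w.1))
    (Ng Nt : ℝ)
    (hNg : Tendsto (fun n => ∑' w : {w : List O // w.length = n}, g w.1 ^ 2 / ge w.1)
      atTop (nhds Ng))
    (hNt : Tendsto (fun n => ∑' w : {w : List O // w.length = n}, g (a :: w.1) ^ 2 / ge w.1)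
      atTop (nhds Nt)) :
    Nt ≤ Ng :=
  le_of_tendsto_of_tendsto' hNt (hNg.comp (tendsto_add_atTop_nat 1)) fun n =>
    tsum_cons_sq_div_le_tsum_succ ge g a hge0 hstat hzero n (hsum (n + 1))

theorem stmt16 {O : Type*} [Countable O] (ge g : List O → ℝ) (a : O)
    (hge0 : ∀ w, 0 ≤ ge w)
    (hstat : ∀ w : List O, ge (a :: w) ≤ ge w)
    (hzero : ∀ w : List O, ge w = 0 → g w = 0)
    (hsum : ∀ n : ℕ, Summable (fun w : {w : List O // w.length = n} => g w.1 ^ 2 / ge w.1))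
    (Ng Nt : ℝ)
    (hNg : Tendsto (fun n => ∑' w : {w : List O // w.length = n}, g w.1 ^ 2 / ge w.1)
      atTop (nhds Ng))
    (hNt : Tendsto (fun n => ∑' w : {w : List O // w.length = n}, g (a :: w.1) ^ 2 / ge w.1)
      atTop (nhds Nt)) :
    Nt ≤ Ng :=
  stmt16_general ge g a hge0 hstat hzero hsum Ng Nt hNg hNt
end
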